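/- Let n be a positive integer, Y_n(q) the n×n matrix with (i,j) entry (-1)^{i+j} q^{-(i-j)(2n+1-i-j)/2} [n-j choose i-j]_q, and for 1 ≤ i ≤ n let Y_n(q)^{[1,n]\setminus\{i\}}_{[1,n-1]} be the (n-1)×(n-1) submatrix obtained by deleting row i and the last column. Then det Y_n(q)^{[1,n]\setminus\{i\}}_{[1,n-1]} = (-q)^{i-n}. -/
import Mathlib
open Finset

/-- Gaussian binomial coefficient, via the q-Pascal recurrence. -/
noncomputable def qbinom (q : ℂ) : ℕ → ℕ → ℂ
  | _, 0 => 1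
  | 0, _+1 => 0
  | m+1, r+1 => qbinom q m r + q ^ (r+1) * qbinom q m (r+1)

/-- Gaussian binomial coefficient with integer arguments, zero when `r < 0` or `r > m`. -/
noncomputable def qbinomZ (q : ℂ) (m r : ℤ) : ℂ :=
  if 0 ≤ r ∧ r ≤ m then qbinom q m.toNat r.toNat else 0

lemma qbinom_eq_zero (q : ℂ) : ∀ m r : ℕ, m < r → qbinom q m r = 0 := by
  intro m
  induction m with
  | zero =>
    intro r hr
    cases r with
    | zero => omega
    | succ r => rfl
  | succ m ih =>
    intro r hr
    cases r with
    | zero => omega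
    | succ r =>
      show qbinom q m r + q ^ (r+1) * qbinom q m (r+1) = 0
      rw [ih r (by omega), ih (r+1) (by omega)]
      ring

lemma qbinomZ_natCast (q : ℂ) (d k : ℕ) : qbinomZ q d k = qbinom q d k := by
  unfold qbinomZ
  split_ifs with h
  · congr 1 <;> omega
  · have : d < k := by omega
    rw [qbinom_eq_zero q d k this]

lemma two_tri (k : ℕ) : k*(k-1) = 2*(k*(k-1)/2) := by
  have he : Even (k*(k-1)) := by
    cases k with
    | zero => simp
    | succ j =>
      simp only [Nat.add_sub_cancel]
      rw [show (j+1)*j = j*(j+1) by ring]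
      exact Nat.even_mul_succ_self j
  obtain ⟨t, ht⟩ := he
  omega

lemma tri_succ (k : ℕ) : (k+1)*k/2 = k*(k-1)/2 + k := by
  have he : Even (k*(k-1)) := by
    cases k with
    | zero => simp
    | succ j =>
      simp only [Nat.add_sub_cancel]
      rw [show (j+1)*j = j*(j+1) by ring]
      exact Nat.even_mul_succ_self j
  obtain ⟨t, ht⟩ := he
  have h2 : (k+1)*k = k*(k-1) + 2*k := by
    cases k with
    | zero => rfl
    | succ j => simp only [Nat.add_sub_cancel]; ring
  omega

lemma qbinom_zero (q : ℂ) (m : ℕ) : qbinom q m 0 = 1 := by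
  cases m <;> rfl

noncomputable def Faux (q x : ℂ) (m s : ℕ) : ℂ :=
  (-1:ℂ)^s * q^(s*(s-1)/2) * (q*x)^s * qbinom q m s

lemma qbinom_sum (q : ℂ) : ∀ (m : ℕ) (x : ℂ),
    ∑ k ∈ Finset.range (m+1), (-1:ℂ)^k * q^(k*(k-1)/2) * x^k * qbinom q m k
      = ∏ j ∈ Finset.range m, (1 - q^j * x) := by
  intro m
  induction m with
  | zero => intro x; simp [qbinom]
  | succ m ih =>
    intro x
    have hP : ∑ k ∈ Finset.range (m+1), Faux q x m k = ∏ j ∈ Finset.range m, (1 - q^j * (q*x)) := by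
      simpa [Faux] using ih (q*x)
    rw [Finset.sum_range_succ']
    have hterm : ∀ i : ℕ, (-1:ℂ)^(i+1) * q^((i+1)*(i+1-1)/2) * x^(i+1) * qbinom q (m+1) (i+1)
        = -x * Faux q x m i + Faux q x m (i+1) := by
      intro i
      simp only [Faux, qbinom, Nat.add_sub_cancel]
      rw [tri_succ]
      ring
    rw [Finset.sum_congr rfl (fun i _ => hterm i), Finset.sum_add_distrib, ← Finset.mul_sum, hP]
    have hF1 : ∑ i ∈ Finset.range (m+1), Faux q x m (i+1)
        = (∑ s ∈ Finset.range (m+1), Faux q x m s) - 1 := by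
      have h := Finset.sum_range_succ' (Faux q x m) (m+1)
      have h2 := Finset.sum_range_succ (Faux q x m) (m+1)
      have hF0 : Faux q x m 0 = 1 := by simp [Faux, qbinom]
      have hFm : Faux q x m (m+1) = 0 := by
        simp [Faux, qbinom_eq_zero q m (m+1) (by omega)]
      rw [hF0] at h
      rw [hFm, add_zero] at h2
      rw [h2] at h
      linear_combination -h
    rw [hF1, hP]
    have h0 : (-1:ℂ)^0 * q^(0*(0-1)/2) * x^0 * qbinom q (m+1) 0 = 1 := by simp [qbinom]
    rw [h0, Finset.prod_range_succ']
    have : ∀ j ∈ Finset.range m, (1 - q^(j+1) * x) = (1 - q^j * (q*x)) := by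
      intro j _; ring
    rw [Finset.prod_congr rfl this]
    ring

lemma row_sum_aux (q : ℂ) (hq : q ≠ 0) (m cv : ℕ) (hc : cv ≤ m) :
    ∑ j ∈ Finset.range (m+1),
      q ^ ((j:ℤ) - m) * ((-1:ℂ) ^ (j + cv)
        * q ^ (-((((j:ℤ) - cv) * (2 * ((m+1:ℕ) : ℤ) - 1 - j - cv)) / 2))
        * qbinomZ q (((m+1:ℕ) : ℤ) - (cv + 1)) ((j:ℤ) - cv))
      = if cv = m then 1 else 0 := by
  set d := m - cv with hd
  have hdZ : ((d:ℕ):ℤ) = (m:ℤ) - cv := by omega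
  rw [← Finset.sum_range_add_sum_Ico _ (show cv ≤ m+1 by omega)]
  have h1 : ∑ j ∈ Finset.range cv,
      q ^ ((j:ℤ) - m) * ((-1:ℂ) ^ (j + cv)
        * q ^ (-((((j:ℤ) - cv) * (2 * ((m+1:ℕ) : ℤ) - 1 - j - cv)) / 2))
        * qbinomZ q (((m+1:ℕ) : ℤ) - (cv + 1)) ((j:ℤ) - cv)) = 0 := by
    refine Finset.sum_eq_zero fun j hj => ?_
    rw [Finset.mem_range] at hj
    have hz : qbinomZ q (((m+1:ℕ) : ℤ) - (cv + 1)) ((j:ℤ) - cv) = 0 := by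
      unfold qbinomZ
      rw [if_neg (by omega)]
    rw [hz, mul_zero, mul_zero]
  rw [h1, zero_add, Finset.sum_Ico_eq_sum_range,
    show m + 1 - cv = d + 1 by omega]
  have hterm : ∀ k ∈ Finset.range (d+1),
      q ^ (((cv + k : ℕ):ℤ) - m) * ((-1:ℂ) ^ ((cv + k) + cv)
        * q ^ (-(((((cv+k:ℕ):ℤ) - cv) * (2 * ((m+1:ℕ) : ℤ) - 1 - (cv+k:ℕ) - cv)) / 2))
        * qbinomZ q (((m+1:ℕ) : ℤ) - (cv + 1)) (((cv+k:ℕ):ℤ) - cv))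
      = q ^ (-(d:ℤ)) * ((-1:ℂ)^k * q^(k*(k-1)/2) * (q ^ ((1:ℤ) - d))^k * qbinom q d k) := by
    intro k hk
    rw [Finset.mem_range] at hk
    obtain ⟨T, hT⟩ : ∃ T : ℕ, k*(k-1)/2 = T := ⟨_, rfl⟩
    rw [hT]
    have e1 : qbinomZ q (((m+1:ℕ) : ℤ) - ((cv:ℤ) + 1)) (((cv+k:ℕ):ℤ) - cv) = qbinom q d k := by
      rw [show ((m+1:ℕ):ℤ) - ((cv:ℤ)+1) = ((d:ℕ):ℤ) by omega,
          show ((cv+k:ℕ):ℤ) - (cv:ℤ) = ((k:ℕ):ℤ) by push_cast; omega]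
      exact qbinomZ_natCast q d k
    have e2 : ((-1:ℂ)) ^ ((cv+k) + cv) = (-1:ℂ)^k := by
      rw [show (cv+k)+cv = 2*cv + k by ring, pow_add, pow_mul]
      norm_num
    have hkk : ((k*(k-1):ℕ):ℤ) = (k:ℤ)*((k:ℤ)-1) := by
      cases k with
      | zero => simp
      | succ j => simp only [Nat.add_sub_cancel]; push_cast; ring
    have hTZ : (k:ℤ)*((k:ℤ)-1) = 2*(T:ℤ) := by
      rw [← hkk]
      have h2 := two_tri k
      rw [hT] at h2
      exact_mod_cast h2
    have e3 : (((cv+k:ℕ):ℤ) - cv) * (2 * ((m+1:ℕ) : ℤ) - 1 - (cv+k:ℕ) - cv)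
        = 2 * ((k:ℤ) * d - (T : ℤ)) := by
      push_cast
      linear_combination (-2*(k:ℤ)) * hdZ - hTZ
    rw [e1, e2, e3, Int.mul_ediv_cancel_left _ two_ne_zero]
    have hE : (((cv+k:ℕ):ℤ) - m) + -((k:ℤ)*(d:ℤ) - (T:ℤ)) = -(d:ℤ) + ((T:ℤ) + ((1:ℤ) - (d:ℤ))*(k:ℤ)) := by
      push_cast
      linear_combination hdZ
    calc q ^ ((((cv+k):ℕ):ℤ) - m) * ((-1:ℂ)^k * q^(-((k:ℤ)*(d:ℤ) - (T:ℤ))) * qbinom q d k)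
        = ((-1:ℂ)^k * qbinom q d k) * q ^ (((((cv+k):ℕ):ℤ) - m) + -((k:ℤ)*(d:ℤ) - (T:ℤ))) := by
          rw [zpow_add₀ hq]; ring
      _ = ((-1:ℂ)^k * qbinom q d k) * q ^ (-(d:ℤ) + ((T:ℤ) + ((1:ℤ) - (d:ℤ))*(k:ℤ))) := by rw [hE]
      _ = q ^ (-(d:ℤ)) * ((-1:ℂ)^k * q^T * (q ^ ((1:ℤ) - d))^k * qbinom q d k) := by
          rw [zpow_add₀ hq, zpow_add₀ hq, ← zpow_natCast q T,
            ← zpow_natCast (q ^ ((1:ℤ)-(d:ℤ))) k, ← zpow_mul]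
          ring
  rw [Finset.sum_congr rfl hterm, ← Finset.mul_sum, qbinom_sum q d (q ^ ((1:ℤ) - d))]
  by_cases hcm : cv = m
  · have : d = 0 := by omega
    rw [this, if_pos hcm]
    simp
  · rw [if_neg hcm]
    have hd1 : 1 ≤ d := by omega
    have hzero : (1 - q^(d-1) * q^((1:ℤ) - d)) = 0 := by
      have h : (q:ℂ)^(d-1) * q^((1:ℤ)-d) = 1 := by
        rw [← zpow_natCast q (d-1), ← zpow_add₀ hq,
          show ((d-1:ℕ):ℤ) + ((1:ℤ) - d) = 0 by omega, zpow_zero]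
      rw [h]; ring
    rw [Finset.prod_eq_zero (Finset.mem_range.mpr (show d-1 < d by omega)) hzero, mul_zero]

theorem minor_of_Y
    (n : ℕ) (hn : 0 < n) (q : ℂ) (hq : q ≠ 0) (i : Fin n) :
    (Matrix.of fun r c : Fin (n-1) =>
        (Matrix.of fun i' j : Fin n =>
          (-1 : ℂ) ^ (i'.val + j.val)
            * q ^ (-((((i'.val : ℤ) - j.val) * (2 * (n : ℤ) - 1 - i'.val - j.val)) / 2))
            * qbinomZ q ((n : ℤ) - (j.val + 1)) ((i'.val : ℤ) - j.val))
          (if r.val < i.val then (⟨r.val, by omega⟩ : Fin n) else ⟨r.val + 1, by omega⟩)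
          ⟨c.val, by omega⟩).det
      = (-q) ^ ((i.val : ℤ) + 1 - n) := by
  obtain ⟨m, rfl⟩ : ∃ m, n = m + 1 := ⟨n - 1, by omega⟩
  set Y : Matrix (Fin (m+1)) (Fin (m+1)) ℂ := Matrix.of fun i' j : Fin (m+1) =>
      (-1 : ℂ) ^ (i'.val + j.val)
        * q ^ (-((((i'.val : ℤ) - j.val) * (2 * ((m+1 : ℕ) : ℤ) - 1 - i'.val - j.val)) / 2))
        * qbinomZ q (((m+1 : ℕ) : ℤ) - (j.val + 1)) ((i'.val : ℤ) - j.val) with hY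
  show (Y.submatrix i.succAbove Fin.castSucc).det = (-q) ^ ((i.val : ℤ) + 1 - ((m+1:ℕ) : ℤ))
  -- row sums
  have hrow : ∀ c : Fin (m+1),
      ∑ j : Fin (m+1), q ^ ((j.val : ℤ) - m) * Y j c
        = if c = Fin.last m then 1 else 0 := by
    intro c
    have h := row_sum_aux q hq m c.val (by omega)
    rw [← Fin.sum_univ_eq_sum_range (fun j : ℕ =>
      q ^ ((j:ℤ) - m) * ((-1:ℂ) ^ (j + c.val)
        * q ^ (-((((j:ℤ) - c.val) * (2 * ((m+1:ℕ) : ℤ) - 1 - j - c.val)) / 2))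
        * qbinomZ q (((m+1:ℕ) : ℤ) - (c.val + 1)) ((j:ℤ) - c.val))) (m+1)] at h
    calc ∑ j : Fin (m+1), q ^ ((j.val : ℤ) - m) * Y j c
        = if c.val = m then 1 else 0 := h
      _ = if c = Fin.last m then 1 else 0 := by
          refine if_congr ?_ rfl rfl
          constructor
          · intro hv; exact Fin.ext hv
          · intro hv; rw [hv]; rfl
  -- Y is lower unitriangular
  have hY0 : ∀ i' j : Fin (m+1), i' < j → Y i' j = 0 := by
    intro i' j hij
    rw [hY]
    simp only [Matrix.of_apply]
    have : qbinomZ q (((m+1 : ℕ) : ℤ) - (j.val + 1)) ((i'.val : ℤ) - j.val) = 0 := by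
      unfold qbinomZ
      rw [if_neg (by rw [Fin.lt_def] at hij; omega)]
    rw [this, mul_zero]
  have hYdet : Y.det = 1 := by
    rw [Matrix.det_of_lowerTriangular Y (fun i' j h => hY0 i' j (by simpa using h))]
    refine Finset.prod_eq_one fun j _ => ?_
    rw [hY]
    simp only [Matrix.of_apply, sub_self, zero_mul, Int.zero_ediv, neg_zero, zpow_zero, mul_one]
    have h1 : ((-1:ℂ)) ^ (j.val + j.val) = 1 := by
      rw [show j.val + j.val = 2 * j.val by ring, pow_mul]; norm_num
    have h2 : qbinomZ q (((m+1 : ℕ) : ℤ) - ((j.val : ℤ) + 1)) 0 = 1 := by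
      unfold qbinomZ
      rw [if_pos (by constructor <;> omega)]
      rw [Int.toNat_zero, qbinom_zero]
    rw [h1, h2, one_mul]
  -- W: replace row i by e_{last}
  set W := Y.updateRow i (Pi.single (Fin.last m) (1:ℂ)) with hW
  have hWdet : W.det = q ^ ((i.val : ℤ) - m) := by
    have hsingle : (Pi.single (Fin.last m) (1:ℂ))
        = ∑ j : Fin (m+1), q ^ ((j.val : ℤ) - m) • Y j := by
      funext c
      rw [Finset.sum_apply]
      simp only [Pi.smul_apply, smul_eq_mul]
      rw [hrow c]
      rw [Pi.single_apply]
    rw [hW, hsingle, Matrix.det_updateRow_sum, hYdet, smul_eq_mul, mul_one]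
  have hWi : ∀ j, W i j = if j = Fin.last m then 1 else 0 := by
    intro j
    rw [hW, Matrix.updateRow_self, Pi.single_apply]
  have hsubW : W.submatrix i.succAbove Fin.castSucc = Y.submatrix i.succAbove Fin.castSucc := by
    ext r c
    simp only [Matrix.submatrix_apply, hW]
    rw [Matrix.updateRow_ne (Fin.succAbove_ne i r)]
  have hexp : W.det = (-1:ℂ) ^ (i.val + m) * (Y.submatrix i.succAbove Fin.castSucc).det := by
    rw [Matrix.det_succ_row W i]
    rw [Finset.sum_eq_single (Fin.last m)]
    · rw [hWi (Fin.last m), if_pos rfl, Fin.succAbove_last, hsubW, Fin.val_last, mul_one]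
    · intro b _ hb
      rw [hWi b, if_neg hb, mul_zero, zero_mul]
    · intro habs
      exact absurd (Finset.mem_univ _) habs
  have hs : (-1:ℂ) ^ (i.val + m) * (-1:ℂ) ^ (i.val + m) = 1 := by
    rw [← pow_add, show (i.val+m)+(i.val+m) = 2*(i.val+m) by ring, pow_mul]
    norm_num
  have hdetsub : (Y.submatrix i.succAbove Fin.castSucc).det
      = (-1:ℂ) ^ (i.val + m) * q ^ ((i.val : ℤ) - m) := by
    calc (Y.submatrix i.succAbove Fin.castSucc).det
        = ((-1:ℂ) ^ (i.val + m) * (-1:ℂ) ^ (i.val + m))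
            * (Y.submatrix i.succAbove Fin.castSucc).det := by rw [hs, one_mul]
      _ = (-1:ℂ) ^ (i.val + m) * W.det := by rw [hexp]; ring
      _ = _ := by rw [hWdet]
  rw [hdetsub, show ((i.val:ℤ) + 1 - ((m+1:ℕ):ℤ)) = (i.val:ℤ) - m by push_cast; ring]
  rw [show (-q) = (-1:ℂ) * q by ring, mul_zpow]
  congr 1
  rw [← zpow_natCast (-1:ℂ) (i.val + m),
    show ((i.val + m : ℕ) : ℤ) = ((i.val:ℤ) - m) + 2 * m by push_cast; ring,
    zpow_add₀ (by norm_num : (-1:ℂ) ≠ 0), zpow_mul]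
  norm_num
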